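/- arXiv:math-ph/0010031 — 2 statements merged into one kernel-verified Lean document; each statement's English description precedes it below -/
import Mathlib

section
/- For all M, M̄ > 0, the infima of the total energy satisfy the scaling law h_{M̄} = (M̄/M)^{7/3} h_M. -/
open MeasureTheory Filter Set Metric
open scoped ENNReal NNReal Topology

noncomputable section

abbrev R3 : Type := EuclideanSpace ℝ (Fin 3)

/-- spatial density induced by a phase-space density, extended-real-valued -/
def rhoE (f : R3 × R3 → ℝ) (x : R3) : ℝ≥0∞ :=
  ∫⁻ v : R3, ENNReal.ofReal (f (x, v))

/-- spatial density, real-valued -/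
def rhoR (f : R3 × R3 → ℝ) (x : R3) : ℝ :=
  (rhoE f x).toReal

/-- kinetic energy -/
def EkinE (f : R3 × R3 → ℝ) : ℝ≥0∞ :=
  (1/2 : ℝ≥0∞) * ∫⁻ p : R3 × R3, ENNReal.ofReal (‖p.2‖ ^ 2 * f p)

/-- the double integral ∫∫ ρ_f(x) ρ_f(y)/|x−y| dx dy -/
def potE (f : R3 × R3 → ℝ) : ℝ≥0∞ :=
  ∫⁻ x : R3, ∫⁻ y : R3, rhoE f x * rhoE f y * ENNReal.ofReal (‖x - y‖⁻¹)

/-- potential energy -/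
def EpotR (f : R3 × R3 → ℝ) : ℝ :=
  -(1/2) * (potE f).toReal

/-- total energy -/
def Hfun (f : R3 × R3 → ℝ) : ℝ :=
  (EkinE f).toReal + EpotR f

/-- Casimir functional -/
def Casimir (Q : ℝ → ℝ) (f : R3 × R3 → ℝ) : ℝ≥0∞ :=
  ∫⁻ p : R3 × R3, ENNReal.ofReal (Q (f p))

/-- the constraint set F_M -/
def FM (Q : ℝ → ℝ) (M : ℝ) : Set (R3 × R3 → ℝ) :=
  {f | Integrable f ∧ (∀ p, 0 ≤ f p) ∧ Casimir Q f = ENNReal.ofReal M ∧ EkinE f < ⊤}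

/-- assumptions on the Casimir kernel Q -/
def QAssump (k C₀ : ℝ) (Q : ℝ → ℝ) : Prop :=
  ContDiffOn ℝ 1 Q (Set.Ici 0) ∧ (∀ s, 0 ≤ s → 0 ≤ Q s) ∧ Q 0 = 0 ∧
    ConvexOn ℝ (Set.Ici 0) Q ∧ ∀ s, 0 ≤ s → C₀ * (s + s ^ (1 + 1/k)) ≤ Q s

/-- Newtonian potential induced by a spatial density -/
def Upot (σ : R3 → ℝ) (x : R3) : ℝ :=
  -∫ y : R3, σ y / ‖x - y‖

/-- gradient of the Newtonian potential -/
def gradU (σ : R3 → ℝ) (x : R3) : R3 :=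
  ∫ y : R3, (σ y / ‖x - y‖ ^ 3) • (x - y)

/-- particle energy -/
def Efun (f : R3 × R3 → ℝ) (p : R3 × R3) : ℝ :=
  (1/2) * ‖p.2‖ ^ 2 + Upot (rhoR f) p.1

/-!
The phase-space dilation `f̄(x, v) = f(a x, a⁻² v)` maps `F_M` bijectively onto `F_{a³M}`:
its Jacobian factor is `a⁻³ · a⁶ = a³`. The kinetic energy gains a further `a⁴` from `|v|²`,
and the potential energy gains `a¹²` from `ρ_f̄(x) = a⁶ ρ_f(a x)`, `a` from `1/|x - y|` and
`a⁻⁶` from the two spatial integrals, so `H(f̄) = a⁷ H(f)`. With `a = (M̄/M)^{1/3}` the set of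
energies over `F_{M̄}` is `a⁷` times the set over `F_M`, and so is its infimum.
-/

section HaarScaling

variable {E F : Type*}
  [NormedAddCommGroup E] [NormedSpace ℝ E] [MeasurableSpace E] [BorelSpace E]
  [FiniteDimensional ℝ E]
  [NormedAddCommGroup F] [NormedSpace ℝ F] [MeasurableSpace F] [BorelSpace F]
  [FiniteDimensional ℝ F]
  (μ : Measure E) [μ.IsAddHaarMeasure] (ν : Measure F) [ν.IsAddHaarMeasure]

lemma lintegral_comp_smul_addHaar {c : ℝ} (hc : c ≠ 0) (g : E → ℝ≥0∞) :
    ∫⁻ x, g (c • x) ∂μ = ENNReal.ofReal |(c ^ Module.finrank ℝ E)⁻¹| * ∫⁻ x, g x ∂μ := by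
  rw [← (measurableEmbedding_const_smul₀ hc).lintegral_map, Measure.map_addHaar_smul μ hc,
    lintegral_smul_measure, smul_eq_mul]

lemma map_prodMap_smul_addHaar {a b : ℝ} (ha : a ≠ 0) (hb : b ≠ 0) :
    (μ.prod ν).map (Prod.map (a • ·) (b • ·)) =
      (ENNReal.ofReal |(a ^ Module.finrank ℝ E)⁻¹| *
        ENNReal.ofReal |(b ^ Module.finrank ℝ F)⁻¹|) • μ.prod ν := by
  rw [← Measure.map_prod_map _ _ (measurable_const_smul a) (measurable_const_smul b),
    Measure.map_addHaar_smul μ ha, Measure.map_addHaar_smul ν hb, Measure.prod_smul_left,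
    Measure.prod_smul_right, smul_smul]

end HaarScaling

lemma lintegral_comp_smul_R3 {c : ℝ} (hc : 0 < c) (g : R3 → ℝ≥0∞) :
    ∫⁻ x, g (c • x) = ENNReal.ofReal (c ^ 3)⁻¹ * ∫⁻ x, g x := by
  rw [lintegral_comp_smul_addHaar volume hc.ne', finrank_euclideanSpace_fin,
    abs_of_pos (by positivity)]

def phaseDilation (a : ℝ) : R3 × R3 → R3 × R3 := Prod.map (a • ·) ((a ^ 2)⁻¹ • ·)

section PhaseDilation

variable {a : ℝ}

lemma measurableEmbedding_phaseDilation (ha : a ≠ 0) :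
    MeasurableEmbedding (phaseDilation a) :=
  (measurableEmbedding_const_smul₀ ha).prodMap (measurableEmbedding_const_smul₀ (by positivity))

lemma map_phaseDilation (ha : 0 < a) :
    (volume : Measure (R3 × R3)).map (phaseDilation a) = ENNReal.ofReal (a ^ 3) • volume := by
  rw [phaseDilation, Measure.volume_eq_prod,
    map_prodMap_smul_addHaar volume volume ha.ne' (by positivity), finrank_euclideanSpace_fin,
    abs_of_pos (by positivity), abs_of_pos (by positivity), ← ENNReal.ofReal_mul (by positivity)]
  congr 2
  field_simp

lemma lintegral_comp_phaseDilation (ha : 0 < a) (g : R3 × R3 → ℝ≥0∞) :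
    ∫⁻ p, g (phaseDilation a p) = ENNReal.ofReal (a ^ 3) * ∫⁻ p, g p := by
  rw [← (measurableEmbedding_phaseDilation ha.ne').lintegral_map, map_phaseDilation ha,
    lintegral_smul_measure, smul_eq_mul]

end PhaseDilation

def rescale (a : ℝ) (f : R3 × R3 → ℝ) : R3 × R3 → ℝ := f ∘ phaseDilation a

lemma Integrable.rescale {f : R3 × R3 → ℝ} (hf : Integrable f) {a : ℝ} (ha : 0 < a) :
    Integrable (rescale a f) := by
  rw [_root_.rescale, ← (measurableEmbedding_phaseDilation ha.ne').integrable_map_iff,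
    map_phaseDilation ha]
  exact hf.smul_measure ENNReal.ofReal_ne_top

section Rescale

variable {a : ℝ} (f : R3 × R3 → ℝ)

lemma rescale_inv_rescale (ha : a ≠ 0) : rescale a (rescale a⁻¹ f) = f := by
  ext ⟨x, v⟩
  simp [rescale, phaseDilation, smul_smul, ha]

lemma casimir_rescale (ha : 0 < a) (Q : ℝ → ℝ) :
    Casimir Q (rescale a f) = ENNReal.ofReal (a ^ 3) * Casimir Q f :=
  lintegral_comp_phaseDilation ha fun p => ENNReal.ofReal (Q (f p))

lemma ekinE_rescale (ha : 0 < a) : EkinE (rescale a f) = ENNReal.ofReal (a ^ 7) * EkinE f := by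
  have hv : ∀ p : R3 × R3, ‖p.2‖ ^ 2 * rescale a f p =
      a ^ 4 * (‖(phaseDilation a p).2‖ ^ 2 * f (phaseDilation a p)) := fun p => by
    simp only [rescale, phaseDilation, Function.comp_apply, Prod.map_snd, norm_smul,
      Real.norm_eq_abs, abs_inv, abs_pow, abs_of_pos ha]
    field_simp
  calc EkinE (rescale a f)
      = 1 / 2 * (ENNReal.ofReal (a ^ 4) *
          ∫⁻ p, ENNReal.ofReal (‖(phaseDilation a p).2‖ ^ 2 * f (phaseDilation a p))) := by
        simp only [EkinE, hv, ENNReal.ofReal_mul (by positivity : (0 : ℝ) ≤ a ^ 4)]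
        rw [lintegral_const_mul' _ _ ENNReal.ofReal_ne_top]
    _ = 1 / 2 * (ENNReal.ofReal (a ^ 4) * (ENNReal.ofReal (a ^ 3) *
          ∫⁻ p, ENNReal.ofReal (‖p.2‖ ^ 2 * f p))) := by
        rw [lintegral_comp_phaseDilation ha fun p => ENNReal.ofReal (‖p.2‖ ^ 2 * f p)]
    _ = ENNReal.ofReal (a ^ 7) * EkinE f := by
        rw [EkinE, ← mul_assoc (ENNReal.ofReal _), ← ENNReal.ofReal_mul (by positivity)]
        ring_nf

lemma rhoE_rescale (ha : 0 < a) (x : R3) :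
    rhoE (rescale a f) x = ENNReal.ofReal (a ^ 6) * rhoE f (a • x) := by
  have h6 : ((a ^ 2)⁻¹ ^ 3)⁻¹ = a ^ 6 := by rw [inv_pow, inv_inv, ← pow_mul]
  calc rhoE (rescale a f) x = ∫⁻ v, ENNReal.ofReal (f (a • x, (a ^ 2)⁻¹ • v)) := rfl
    _ = ENNReal.ofReal (a ^ 6) * rhoE f (a • x) := by
        rw [lintegral_comp_smul_R3 (by positivity) fun v => ENNReal.ofReal (f (a • x, v)), h6,
          rhoE]

lemma potE_rescale (ha : 0 < a) : potE (rescale a f) = ENNReal.ofReal (a ^ 7) * potE f := by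
  set K : R3 → R3 → ℝ≥0∞ := fun x y => rhoE f x * rhoE f y * ENNReal.ofReal ‖x - y‖⁻¹
  have hK : ∀ x y : R3, rhoE (rescale a f) x * rhoE (rescale a f) y * ENNReal.ofReal ‖x - y‖⁻¹ =
      ENNReal.ofReal (a ^ 13) * K (a • x) (a • y) := fun x y => by
    have hdist : ‖x - y‖⁻¹ = a * ‖a • x - a • y‖⁻¹ := by
      rw [← smul_sub, norm_smul, Real.norm_eq_abs, abs_of_pos ha, mul_inv, ← mul_assoc,
        mul_inv_cancel₀ ha.ne', one_mul]
    have h13 : ENNReal.ofReal (a ^ 13) =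
        ENNReal.ofReal (a ^ 6) * ENNReal.ofReal (a ^ 6) * ENNReal.ofReal a := by
      rw [← ENNReal.ofReal_mul (by positivity), ← ENNReal.ofReal_mul (by positivity)]
      ring_nf
    rw [rhoE_rescale f ha, rhoE_rescale f ha, hdist, ENNReal.ofReal_mul ha.le, h13]
    ring
  have hc : ENNReal.ofReal (a ^ 13) * (ENNReal.ofReal (a ^ 3)⁻¹ * ENNReal.ofReal (a ^ 3)⁻¹) =
      ENNReal.ofReal (a ^ 7) := by
    rw [← ENNReal.ofReal_mul (by positivity), ← ENNReal.ofReal_mul (by positivity)]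
    congr 1
    field_simp
  calc potE (rescale a f)
      = ENNReal.ofReal (a ^ 13) * ∫⁻ x, ∫⁻ y, K (a • x) (a • y) := by
        simp only [potE, hK, lintegral_const_mul' _ _ ENNReal.ofReal_ne_top]
    _ = ENNReal.ofReal (a ^ 13) * (ENNReal.ofReal (a ^ 3)⁻¹ *
          (ENNReal.ofReal (a ^ 3)⁻¹ * ∫⁻ x, ∫⁻ y, K x y)) := by
        rw [lintegral_congr fun x => lintegral_comp_smul_R3 ha (K (a • x)),
          lintegral_const_mul' _ _ ENNReal.ofReal_ne_top,
          lintegral_comp_smul_R3 ha fun x => ∫⁻ y, K x y]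
    _ = ENNReal.ofReal (a ^ 7) * potE f := by
        rw [← hc, potE]
        ring

lemma hfun_rescale (ha : 0 < a) : Hfun (rescale a f) = a ^ 7 * Hfun f := by
  rw [Hfun, EpotR, ekinE_rescale f ha, potE_rescale f ha, ENNReal.toReal_mul,
    ENNReal.toReal_mul, ENNReal.toReal_ofReal (by positivity), Hfun, EpotR]
  ring

lemma rescale_mem_FM (ha : 0 < a) {Q : ℝ → ℝ} {M : ℝ} (hf : f ∈ FM Q M) :
    rescale a f ∈ FM Q (a ^ 3 * M) := by
  obtain ⟨hint, hnonneg, hcas, hkin⟩ := hf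
  refine ⟨Integrable.rescale hint ha, fun p => hnonneg _, ?_, ?_⟩
  · rw [casimir_rescale f ha, hcas, ← ENNReal.ofReal_mul (by positivity)]
  · rw [ekinE_rescale f ha]
    exact ENNReal.mul_lt_top ENNReal.ofReal_lt_top hkin

end Rescale

lemma image_rescale_FM {a : ℝ} (ha : 0 < a) (Q : ℝ → ℝ) (M : ℝ) :
    rescale a '' FM Q M = FM Q (a ^ 3 * M) := by
  refine subset_antisymm (image_subset_iff.2 fun f hf => rescale_mem_FM f ha hf) fun g hg =>
    ⟨rescale a⁻¹ g, ?_, rescale_inv_rescale g ha.ne'⟩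
  have := rescale_mem_FM g (inv_pos.2 ha) hg
  rwa [← mul_assoc, inv_pow, inv_mul_cancel₀ (by positivity), one_mul] at this

open scoped Pointwise in
lemma hfun_image_FM_mul {a : ℝ} (ha : 0 < a) (Q : ℝ → ℝ) (M : ℝ) :
    Hfun '' FM Q (a ^ 3 * M) = a ^ 7 • Hfun '' FM Q M := by
  rw [← image_rescale_FM ha, ← image_smul, image_image, image_image]
  exact image_congr fun f _ => hfun_rescale f ha

theorem stmt6_general (M Mbar : ℝ) (hM : 0 < M) (hMbar : 0 < Mbar)
    (Q : ℝ → ℝ) :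
    sInf (Hfun '' FM Q Mbar) = (Mbar / M) ^ ((7:ℝ)/3) * sInf (Hfun '' FM Q M) := by
  obtain ⟨a, ha, rfl⟩ : ∃ a > 0, Mbar = a ^ 3 * M := by
    refine ⟨(Mbar / M) ^ ((1:ℝ)/3), by positivity, ?_⟩
    rw [← Real.rpow_natCast, ← Real.rpow_mul (by positivity)]
    norm_num
    field_simp
  have h7 : (a ^ 3) ^ ((7:ℝ)/3) = a ^ 7 := by
    rw [← Real.rpow_natCast, ← Real.rpow_mul ha.le]
    norm_num
  rw [hfun_image_FM_mul ha, Real.sInf_smul_of_nonneg (by positivity), smul_eq_mul,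
    mul_div_cancel_right₀ _ hM.ne', h7]

/-- the scaling law h_{M̄} = (M̄/M)^{7/3} h_M. -/
theorem stmt6 (k C₀ M Mbar : ℝ) (hk : 0 < k) (hk' : k < 7/2) (hC₀ : 0 < C₀)
    (hM : 0 < M) (hMbar : 0 < Mbar)
    (Q : ℝ → ℝ) (hQ : QAssump k C₀ Q) :
    sInf (Hfun '' FM Q Mbar) = (Mbar / M) ^ ((7:ℝ)/3) * sInf (Hfun '' FM Q M) :=
  stmt6_general M Mbar hM hMbar Q
end
end

section
/- For all τ ∈ [0,1], τ^{7/3} + (1−τ)^{7/3} ≤ 1 − (7/3) τ (1−τ). -/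
open MeasureTheory Filter Set Metric
open scoped ENNReal NNReal Topology

noncomputable section

lemma aux_pow73 (t : ℝ) (ht : 0 ≤ t) : t ^ ((7:ℝ)/3) ≤ (t^3 + 2*t^2)/3 := by
  set u := t ^ ((1:ℝ)/3) with hu
  have hu0 : 0 ≤ u := Real.rpow_nonneg ht _
  have hut : u ^ (3:ℕ) = t := by
    rw [hu, ← Real.rpow_natCast (t ^ ((1:ℝ)/3)) 3, ← Real.rpow_mul ht]
    norm_num
  have h7 : t ^ ((7:ℝ)/3) = u ^ (7:ℕ) := by
    rw [hu, ← Real.rpow_natCast (t ^ ((1:ℝ)/3)) 7, ← Real.rpow_mul ht]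
    norm_num
  rw [h7, ← hut]
  nlinarith [sq_nonneg (u - 1), pow_nonneg hu0 6, sq_nonneg u,
    mul_nonneg (pow_nonneg hu0 6) (sq_nonneg (u-1)),
    mul_nonneg (mul_nonneg (pow_nonneg hu0 6) (sq_nonneg (u-1))) hu0]

/-- the elementary inequality τ^{7/3} + (1−τ)^{7/3} ≤ 1 − (7/3)τ(1−τ). -/
theorem stmt7 :
    ∀ τ ∈ Set.Icc (0:ℝ) 1,
      τ ^ ((7:ℝ)/3) + (1 - τ) ^ ((7:ℝ)/3) ≤ 1 - 7/3 * (τ * (1 - τ)) := by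
  intro τ hτ
  obtain ⟨h0, h1⟩ := hτ
  have ha := aux_pow73 τ h0
  have hb := aux_pow73 (1 - τ) (by linarith)
  nlinarith [ha, hb]
end
end
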